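/- If φ_B is a kernel comparable with a ball B (satisfying ∫φ_B = 1 and the two-sided bound with modulus ω with ∫₁^∞ ω < ∞), then for every x ∈ B, |∫_X f·φ_B| ≤ C·Mf(x), where Mf is the standard maximal function over the ball-basis and C is admissible. -/

import Mathlib

open MeasureTheory

/-- A ball-basis on a measure space `(X, μ)` (Karagulyan). -/
structure BallBasis (X : Type*) [MeasurableSpace X] (μ : Measure X) where
  /-- the family of balls -/
  balls : Set (Set X)
  meas : ∀ B ∈ balls, MeasurableSet B
  /-- B1): positive measure -/
  pos : ∀ B ∈ balls, 0 < μ B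
  /-- B1): finite measure -/
  fin : ∀ B ∈ balls, μ B < ⊤
  /-- B2): any two points lie in a common ball -/
  two_points : ∀ x y : X, ∃ B ∈ balls, x ∈ B ∧ y ∈ B
  /-- B3): approximation of measurable sets by countable unions of balls -/
  approx : ∀ E : Set X, MeasurableSet E → ∀ ε : ENNReal, 0 < ε →
    ∃ Bs : ℕ → Set X, (∀ k, Bs k ∈ balls) ∧ μ (symmDiff E (⋃ k, Bs k)) < ε
  /-- the hull-ball `B*` -/
  hull : Set X → Set X
  hull_mem : ∀ B ∈ balls, hull B ∈ balls
  /-- B4): every ball `A` with `μ(A) ≤ 2μ(B)` intersecting `B` lies in `B*` -/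
  hull_sub : ∀ B ∈ balls, ∀ A ∈ balls, μ A ≤ 2 * μ B → (A ∩ B).Nonempty → A ⊆ hull B
  /-- the constant `K` -/
  K : NNReal
  /-- B4): `μ(B*) ≤ K μ(B)` -/
  hull_bound : ∀ B ∈ balls, μ (hull B) ≤ K * μ B

/-- A ball-basis is doubling if any ball `B` with `B* ≠ X` has an enlargement
`B'` with `2μ(B) ≤ μ(B') ≤ ημ(B)`. -/
def BallBasis.Doubling {X : Type*} [MeasurableSpace X] {μ : Measure X}
    (𝓑 : BallBasis X μ) (η : NNReal) : Prop :=
  2 < η ∧ ∀ B ∈ 𝓑.balls, 𝓑.hull B ≠ Set.univ →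
    ∃ B' ∈ 𝓑.balls, B ⊆ B' ∧ 2 * μ B ≤ μ B' ∧ μ B' ≤ η * μ B

/-- `d(x,B)`: the infimum of measures of balls containing both `B` and `x`. -/
noncomputable def BallBasis.dist {X : Type*} [MeasurableSpace X] {μ : Measure X}
    (𝓑 : BallBasis X μ) (x : X) (B : Set X) : ENNReal :=
  ⨅ (C : Set X) (_ : C ∈ 𝓑.balls ∧ B ⊆ C ∧ x ∈ C), μ C

/-- The standard maximal function over the ball-basis. -/
noncomputable def BallBasis.maxFn {X : Type*} [MeasurableSpace X] {μ : Measure X}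
    (𝓑 : BallBasis X μ) (f : X → ℝ) (x : X) : ENNReal :=
  ⨆ (B : Set X) (_ : B ∈ 𝓑.balls ∧ x ∈ B), (∫⁻ y in B, ‖f y‖₊ ∂μ) / μ B

/-- `ω : [1,∞) → [0,1]` is a modulus of continuity: non-increasing, `ω(1) = 1`,
and `ω(2t) ≤ c₀ ω(t)`. -/
structure IsModulus (ω : ℝ → ℝ) (c₀ : ℝ) : Prop where
  nonneg : ∀ t, 1 ≤ t → 0 ≤ ω t
  le_one : ∀ t, 1 ≤ t → ω t ≤ 1
  one : ω 1 = 1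
  antitone : ∀ s t, 1 ≤ s → s ≤ t → ω t ≤ ω s
  doubling : ∀ t, 1 ≤ t → ω (2 * t) ≤ c₀ * ω t

/-- `φ` is a kernel comparable with the ball `B`: it is nonnegative, has total
integral `1`, and satisfies `c₁ 1_B/μ(B) ≤ φ ≤ c₂ ω(d(·,B)/μ(B))/μ(B)`. -/
structure Comparable {X : Type*} [MeasurableSpace X] {μ : Measure X}
    (𝓑 : BallBasis X μ) (ω : ℝ → ℝ) (c₁ c₂ : ℝ) (B : Set X) (φ : X → ℝ) :
    Prop where
  nonneg : ∀ x, 0 ≤ φ x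
  integrable : Integrable φ μ
  total : ∫ x, φ x ∂μ = 1
  lower : ∀ x ∈ B, c₁ / (μ B).toReal ≤ φ x
  upper : ∀ x, φ x ≤ c₂ / (μ B).toReal * ω ((𝓑.dist x B / μ B).toReal)


namespace BallBasis

open scoped Classical

variable {X : Type*} [MeasurableSpace X] {μ : Measure X}

noncomputable def enl (𝓑 : BallBasis X μ) (η : NNReal) (D : Set X) : Set X :=
  if h : ∃ B' ∈ 𝓑.balls, D ⊆ B' ∧ 2 * μ D ≤ μ B' ∧ μ B' ≤ η * μ D then h.choose else D

/-- The chain of hulls of enlargements starting from `B`. -/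
noncomputable def chain (𝓑 : BallBasis X μ) (η : NNReal) (B : Set X) : ℕ → Set X
  | 0 => B
  | (k+1) => 𝓑.hull (𝓑.enl η (𝓑.chain η B k))

variable {𝓑 : BallBasis X μ} {η : NNReal}

lemma nonempty_of_mem {D : Set X} (hD : D ∈ 𝓑.balls) : D.Nonempty :=
  MeasureTheory.nonempty_of_measure_ne_zero (𝓑.pos D hD).ne'

lemma subset_hull {D : Set X} (hD : D ∈ 𝓑.balls) : D ⊆ 𝓑.hull D :=
  𝓑.hull_sub D hD D hD (le_mul_of_one_le_left zero_le one_le_two)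
    (by simpa using nonempty_of_mem hD)

lemma enl_mem {D : Set X} (hD : D ∈ 𝓑.balls) : 𝓑.enl η D ∈ 𝓑.balls := by
  unfold enl; split
  · next h => exact h.choose_spec.1
  · exact hD

lemma subset_enl {D : Set X} : D ⊆ 𝓑.enl η D := by
  unfold enl; split
  · next h => exact h.choose_spec.2.1
  · exact subset_rfl

lemma enl_spec (hdb : 𝓑.Doubling η) {D : Set X} (hD : D ∈ 𝓑.balls) :
    (2 * μ D ≤ μ (𝓑.enl η D) ∧ μ (𝓑.enl η D) ≤ η * μ D) ∨
      (𝓑.enl η D = D ∧ 𝓑.hull D = Set.univ) := by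
  unfold enl; split
  · next h => exact Or.inl ⟨h.choose_spec.2.2.1, h.choose_spec.2.2.2⟩
  · next h =>
      refine Or.inr ⟨rfl, ?_⟩
      by_contra hne
      exact h (hdb.2 D hD hne)

lemma enl_meas_le (hdb : 𝓑.Doubling η) {D : Set X} (hD : D ∈ 𝓑.balls) :
    μ (𝓑.enl η D) ≤ η * μ D := by
  rcases enl_spec hdb hD with h | h
  · exact h.2
  · rw [h.1]
    calc μ D = 1 * μ D := (one_mul _).symm
    _ ≤ η * μ D := by
        gcongr
        exact_mod_cast le_of_lt (lt_trans one_lt_two hdb.1)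

lemma chain_mem {B : Set X} (hB : B ∈ 𝓑.balls) : ∀ k, 𝓑.chain η B k ∈ 𝓑.balls
  | 0 => hB
  | (k+1) => 𝓑.hull_mem _ (enl_mem (chain_mem hB k))

lemma chain_subset_succ {B : Set X} (hB : B ∈ 𝓑.balls) (k : ℕ) :
    𝓑.chain η B k ⊆ 𝓑.chain η B (k+1) :=
  subset_enl.trans (subset_hull (enl_mem (chain_mem hB k)))

lemma chain_mono {B : Set X} (hB : B ∈ 𝓑.balls) : Monotone (𝓑.chain η B) :=
  monotone_nat_of_le_succ fun k => chain_subset_succ hB k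

lemma subset_chain {B : Set X} (hB : B ∈ 𝓑.balls) (k : ℕ) : B ⊆ 𝓑.chain η B k :=
  chain_mono hB (Nat.zero_le k)

lemma chain_univ_succ {B : Set X} (hB : B ∈ 𝓑.balls) {k : ℕ}
    (h : 𝓑.chain η B k = Set.univ) : 𝓑.chain η B (k+1) = Set.univ :=
  Set.eq_univ_of_univ_subset (h ▸ chain_subset_succ hB k)

/-- If the next chain element is not everything, the enlargement at step `k` doubled. -/
lemma enl_doubles (hdb : 𝓑.Doubling η) {B : Set X} (hB : B ∈ 𝓑.balls) {k : ℕ}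
    (h : 𝓑.chain η B (k+1) ≠ Set.univ) :
    2 * μ (𝓑.chain η B k) ≤ μ (𝓑.enl η (𝓑.chain η B k)) := by
  rcases enl_spec hdb (chain_mem hB k) with hs | hs
  · exact hs.1
  · exact absurd (by rw [chain, hs.1, hs.2]) h

lemma good_mono (hB : B ∈ 𝓑.balls) {k : ℕ} (h : 𝓑.chain η B (k+1+1) ≠ Set.univ) :
    𝓑.chain η B (k+1) ≠ Set.univ := fun hu => h (chain_univ_succ hB hu)

lemma chain_growth (hdb : 𝓑.Doubling η) {B : Set X} (hB : B ∈ 𝓑.balls) :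
    ∀ k : ℕ, 𝓑.chain η B (k+1) ≠ Set.univ →
      2^(k+1) * μ B ≤ μ (𝓑.enl η (𝓑.chain η B k))
  | 0, h => by simpa [chain] using enl_doubles hdb hB h
  | (k+1), h => by
      have h1 : 𝓑.chain η B (k+1) ≠ Set.univ := good_mono hB h
      calc (2:ENNReal)^(k+2) * μ B = 2 * (2^(k+1) * μ B) := by ring
      _ ≤ 2 * μ (𝓑.enl η (𝓑.chain η B k)) := by
          gcongr; exact chain_growth hdb hB k h1
      _ ≤ 2 * μ (𝓑.hull (𝓑.enl η (𝓑.chain η B k))) := by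
          gcongr
          exact subset_hull (enl_mem (chain_mem hB k))
      _ = 2 * μ (𝓑.chain η B (k+1)) := rfl
      _ ≤ μ (𝓑.enl η (𝓑.chain η B (k+1))) := enl_doubles hdb hB h


lemma exists_pow_le {a b : ENNReal} (ha : a ≠ 0) (ha' : a ≠ ⊤) (hb : b ≠ ⊤) :
    ∃ k : ℕ, b ≤ 2^(k+1) * a := by
  obtain ⟨n, hn⟩ := ENNReal.exists_nat_gt (ENNReal.div_lt_top hb ha).ne
  refine ⟨n, ?_⟩
  calc b = b / a * a := (ENNReal.div_mul_cancel ha ha').symm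
  _ ≤ (n : ENNReal) * a := mul_le_mul_left hn.le a
  _ ≤ 2^(n+1) * a := by
      gcongr
      calc (n : ENNReal) ≤ 2^n := by exact_mod_cast (Nat.lt_two_pow_self (n := n)).le
      _ ≤ 2^(n+1) := by gcongr <;> simp

lemma chain_cover (hdb : 𝓑.Doubling η) {B : Set X} (hB : B ∈ 𝓑.balls) :
    (⋃ k, 𝓑.chain η B k) = Set.univ := by
  refine Set.eq_univ_of_forall fun y => ?_
  by_cases hu : ∃ k, 𝓑.chain η B (k+1) = Set.univ
  · obtain ⟨k, hk⟩ := hu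
    exact Set.mem_iUnion.2 ⟨k+1, hk ▸ Set.mem_univ y⟩
  push_neg at hu
  obtain ⟨z, hz⟩ := nonempty_of_mem hB
  obtain ⟨D, hD, hzD, hyD⟩ := 𝓑.two_points z y
  obtain ⟨k, hk⟩ := exists_pow_le (𝓑.pos B hB).ne' (𝓑.fin B hB).ne (𝓑.fin D hD).ne
  refine Set.mem_iUnion.2 ⟨k+1, ?_⟩
  have hsub : D ⊆ 𝓑.hull (𝓑.enl η (𝓑.chain η B k)) := by
    refine 𝓑.hull_sub _ (enl_mem (chain_mem hB k)) D hD ?_ ⟨z, hzD, (subset_chain hB k).trans subset_enl hz⟩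
    calc μ D ≤ 2^(k+1) * μ B := hk
    _ ≤ μ (𝓑.enl η (𝓑.chain η B k)) := chain_growth hdb hB k (hu k)
    _ ≤ 2 * μ (𝓑.enl η (𝓑.chain η B k)) := le_mul_of_one_le_left zero_le one_le_two
  exact hsub hyD

lemma dist_le_of_mem {B C : Set X} (hC : C ∈ 𝓑.balls) (hBC : B ⊆ C) {y : X} (hy : y ∈ C) :
    𝓑.dist y B ≤ μ C := by
  refine iInf_le_of_le C ?_
  exact iInf_le_of_le ⟨hC, hBC, hy⟩ le_rfl

lemma dist_lt_top (hdb : 𝓑.Doubling η) {B : Set X} (hB : B ∈ 𝓑.balls) (y : X) :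
    𝓑.dist y B < ⊤ := by
  have : y ∈ ⋃ k, 𝓑.chain η B k := (chain_cover hdb hB) ▸ Set.mem_univ y
  obtain ⟨k, hk⟩ := Set.mem_iUnion.mp this
  exact lt_of_le_of_lt (dist_le_of_mem (chain_mem hB k) (subset_chain hB k) hk)
    (𝓑.fin _ (chain_mem hB k))

lemma le_dist {B : Set X} (y : X) : μ B ≤ 𝓑.dist y B :=
  le_iInf fun C => le_iInf fun hC => μ.mono hC.2.1

lemma dist_ge (hdb : 𝓑.Doubling η) {B : Set X} (hB : B ∈ 𝓑.balls) {k : ℕ} {y : X}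
    (hy : y ∉ 𝓑.chain η B (k+1)) :
    2 * μ (𝓑.enl η (𝓑.chain η B k)) ≤ 𝓑.dist y B := by
  refine le_iInf fun C => le_iInf fun hC => ?_
  by_contra hlt
  push_neg at hlt
  have hsub : C ⊆ 𝓑.chain η B (k+1) := by
    obtain ⟨z, hz⟩ := nonempty_of_mem hB
    refine 𝓑.hull_sub _ (enl_mem (chain_mem hB k)) C hC.1 hlt.le
      ⟨z, hC.2.1 hz, (subset_chain hB k).trans subset_enl hz⟩
  exact hy (hsub hC.2.2)


/-- `s k = μ(E_k)/μ(B)` as a real number. -/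
noncomputable def sval (𝓑 : BallBasis X μ) (η : NNReal) (B : Set X) (k : ℕ) : ℝ :=
  (μ (𝓑.enl η (𝓑.chain η B k))).toReal / (μ B).toReal

lemma sval_nonneg (B : Set X) (k : ℕ) : 0 ≤ 𝓑.sval η B k :=
  div_nonneg ENNReal.toReal_nonneg ENNReal.toReal_nonneg

lemma measB_pos {B : Set X} (hB : B ∈ 𝓑.balls) : 0 < (μ B).toReal :=
  ENNReal.toReal_pos (𝓑.pos B hB).ne' (𝓑.fin B hB).ne

lemma two_le_sval (hdb : 𝓑.Doubling η) {B : Set X} (hB : B ∈ 𝓑.balls) {k : ℕ}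
    (h : 𝓑.chain η B (k+1) ≠ Set.univ) : 2 ≤ 𝓑.sval η B k := by
  rw [sval, le_div_iff₀ (measB_pos hB)]
  have h1 : 2 * μ B ≤ μ (𝓑.enl η (𝓑.chain η B k)) := by
    calc 2 * μ B ≤ 2 * μ (𝓑.chain η B k) := by gcongr; exact subset_chain hB k
    _ ≤ _ := enl_doubles hdb hB h
  have := ENNReal.toReal_mono (𝓑.fin _ (enl_mem (chain_mem hB k))).ne h1
  rw [ENNReal.toReal_mul] at this
  simpa using this

lemma sval_succ (hdb : 𝓑.Doubling η) {B : Set X} (hB : B ∈ 𝓑.balls) {k : ℕ}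
    (h : 𝓑.chain η B (k+2) ≠ Set.univ) : 2 * 𝓑.sval η B k ≤ 𝓑.sval η B (k+1) := by
  rw [sval, sval, mul_div_assoc', div_le_div_iff_of_pos_right (measB_pos hB)]
  have h1 : 2 * μ (𝓑.enl η (𝓑.chain η B k)) ≤ μ (𝓑.enl η (𝓑.chain η B (k+1))) := by
    calc 2 * μ (𝓑.enl η (𝓑.chain η B k)) ≤ 2 * μ (𝓑.chain η B (k+1)) := by
          gcongr
          · exact subset_hull (enl_mem (chain_mem hB k))
    _ ≤ _ := enl_doubles hdb hB h
  have := ENNReal.toReal_mono (𝓑.fin _ (enl_mem (chain_mem hB (k+1)))).ne h1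
  rw [ENNReal.toReal_mul] at this
  simpa using this

lemma sval_le_sval (hdb : 𝓑.Doubling η) {B : Set X} (hB : B ∈ 𝓑.balls) :
    ∀ j k : ℕ, k < j → 𝓑.chain η B (j+1) ≠ Set.univ → 2 * 𝓑.sval η B k ≤ 𝓑.sval η B j := by
  intro j
  induction j with
  | zero => intro k hk; omega
  | succ j ih =>
      intro k hk h
      rcases Nat.lt_succ_iff_lt_or_eq.mp hk with h' | h'
      · calc 2 * 𝓑.sval η B k ≤ 𝓑.sval η B j := ih k h' (good_mono hB h)
        _ ≤ 2 * 𝓑.sval η B j := le_mul_of_one_le_left (sval_nonneg B j) one_le_two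
        _ ≤ 𝓑.sval η B (j+1) := sval_succ hdb hB h
      · subst h'
        exact sval_succ hdb hB h


lemma key_sum (hdb : 𝓑.Doubling η) {B : Set X} (hB : B ∈ 𝓑.balls)
    {ω : ℝ → ℝ} {c₀ : ℝ} (hω : IsModulus ω c₀)
    (hωint : IntegrableOn ω (Set.Ioi (1 : ℝ))) :
    (∑' k : ℕ, if 𝓑.chain η B (k+1) = Set.univ then 0
      else ENNReal.ofReal (𝓑.sval η B k * ω (2 * 𝓑.sval η B k)))
      ≤ ENNReal.ofReal (∫ t in Set.Ioi (1:ℝ), ω t) := by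
  classical
  set s := 𝓑.sval η B with hs
  set T : ℕ → Set ℝ := fun k =>
    if 𝓑.chain η B (k+1) = Set.univ then (∅ : Set ℝ) else Set.Ioc (s k) (2 * s k) with hT
  have hTmeas : ∀ k, MeasurableSet (T k) := by
    intro k; rw [hT]; dsimp only; split
    · exact MeasurableSet.empty
    · exact measurableSet_Ioc
  have hTIoi : ∀ k, T k ⊆ Set.Ioi 1 := by
    intro k; rw [hT]; dsimp only; split
    · exact Set.empty_subset _
    · next h =>
        intro t ht
        have h2 : (2:ℝ) ≤ s k := two_le_sval hdb hB h
        exact lt_of_lt_of_le (by linarith) ht.1.le |>.trans_le le_rfl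
  have hTdisj : Pairwise (Function.onFun Disjoint T) := by
    have H : ∀ k j : ℕ, k < j → Disjoint (T k) (T j) := by
      intro k j hlt
      rw [Set.disjoint_left]
      intro t htk htj
      rw [hT] at htk htj
      dsimp only at htk htj
      by_cases hk : 𝓑.chain η B (k+1) = Set.univ
      · simp [hk] at htk
      by_cases hj : 𝓑.chain η B (j+1) = Set.univ
      · simp [hj] at htj
      rw [if_neg hk] at htk
      rw [if_neg hj] at htj
      have : 2 * s k ≤ s j := sval_le_sval hdb hB j k hlt hj
      have := htk.2
      have := htj.1
      linarith
    intro k j hkj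
    rcases lt_or_gt_of_ne hkj with h | h
    · exact H k j h
    · exact (H j k h).symm
  have claim1 : ∀ k : ℕ,
      (if 𝓑.chain η B (k+1) = Set.univ then 0
        else ENNReal.ofReal (s k * ω (2 * s k)))
      ≤ ∫⁻ t in T k, ENNReal.ofReal (ω t) := by
    intro k
    split
    · exact zero_le
    · next h =>
        have h2 : (2:ℝ) ≤ s k := two_le_sval hdb hB h
        have hTk : T k = Set.Ioc (s k) (2 * s k) := by rw [hT]; simp [h]
        have hvol : volume (Set.Ioc (s k) (2 * s k)) = ENNReal.ofReal (s k) := by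
          rw [Real.volume_Ioc]; congr 1; ring
        calc ENNReal.ofReal (s k * ω (2 * s k))
            = ENNReal.ofReal (ω (2 * s k)) * ENNReal.ofReal (s k) := by
              rw [← ENNReal.ofReal_mul (hω.nonneg _ (by linarith))]; ring_nf
        _ = ∫⁻ t in T k, ENNReal.ofReal (ω (2 * s k)) := by
              rw [setLIntegral_const, hTk, hvol]
        _ = ∫⁻ t, (T k).indicator (fun _ => ENNReal.ofReal (ω (2 * s k))) t := by
              rw [lintegral_indicator (hTmeas k)]
        _ ≤ ∫⁻ t, (T k).indicator (fun t => ENNReal.ofReal (ω t)) t := by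
              refine lintegral_mono fun t => ?_
              by_cases ht : t ∈ T k
              · rw [Set.indicator_of_mem ht, Set.indicator_of_mem ht]
                refine ENNReal.ofReal_le_ofReal ?_
                rw [hTk] at ht
                exact hω.antitone t (2 * s k) (by linarith [ht.1]) ht.2
              · rw [Set.indicator_of_notMem ht, Set.indicator_of_notMem ht]
        _ = ∫⁻ t in T k, ENNReal.ofReal (ω t) := lintegral_indicator (hTmeas k) _
  calc (∑' k : ℕ, if 𝓑.chain η B (k+1) = Set.univ then 0
      else ENNReal.ofReal (s k * ω (2 * s k)))
      ≤ ∑' k, ∫⁻ t in T k, ENNReal.ofReal (ω t) := ENNReal.tsum_le_tsum claim1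
  _ = ∫⁻ t in ⋃ k, T k, ENNReal.ofReal (ω t) := (lintegral_iUnion hTmeas hTdisj _).symm
  _ ≤ ∫⁻ t in Set.Ioi (1:ℝ), ENNReal.ofReal (ω t) :=
      lintegral_mono_set (Set.iUnion_subset hTIoi)
  _ = ENNReal.ofReal (∫ t in Set.Ioi (1:ℝ), ω t) := by
      rw [MeasureTheory.ofReal_integral_eq_lintegral_ofReal hωint]
      exact (ae_restrict_iff' measurableSet_Ioi).2
        (Filter.Eventually.of_forall fun t ht => hω.nonneg t (le_of_lt ht))


lemma maxFn_bound {f : X → ℝ} {x : X} {D : Set X} (hD : D ∈ 𝓑.balls) (hxD : x ∈ D) :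
    ∫⁻ y in D, ‖f y‖₊ ∂μ ≤ μ D * 𝓑.maxFn f x := by
  have h1 : (∫⁻ y in D, ‖f y‖₊ ∂μ) / μ D ≤ 𝓑.maxFn f x :=
    le_iSup_of_le D (le_iSup_of_le ⟨hD, hxD⟩ le_rfl)
  calc ∫⁻ y in D, ‖f y‖₊ ∂μ
      = (∫⁻ y in D, ‖f y‖₊ ∂μ) / μ D * μ D :=
        (ENNReal.div_mul_cancel (𝓑.pos D hD).ne' (𝓑.fin D hD).ne).symm
  _ ≤ 𝓑.maxFn f x * μ D := mul_le_mul_left h1 _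
  _ = μ D * 𝓑.maxFn f x := mul_comm _ _

end BallBasis

open BallBasis in
set_option maxHeartbeats 1000000 in
theorem kernel_avg_le_maxFn' {X : Type*} [MeasurableSpace X] (μ : Measure X)
    (𝓑 : BallBasis X μ) (η : NNReal) (hdb : 𝓑.Doubling η)
    (ω : ℝ → ℝ) (c₀ c₁ c₂ : ℝ) (hc₁ : 0 < c₁) (hc₂ : 0 < c₂)
    (hω : IsModulus ω c₀) (hωint : IntegrableOn ω (Set.Ioi (1 : ℝ))) :
    ∃ C : ENNReal, 0 < C ∧ C < ⊤ ∧
      ∀ B ∈ 𝓑.balls, ∀ φ : X → ℝ, Comparable 𝓑 ω c₁ c₂ B φ →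
      ∀ f : X → ℝ, (∀ D ∈ 𝓑.balls, IntegrableOn f D μ) →
        Integrable (fun y => f y * φ y) μ →
      ∀ x ∈ B,
        ENNReal.ofReal |∫ y, f y * φ y ∂μ| ≤ C * 𝓑.maxFn f x := by
  classical
  set I := ∫ t in Set.Ioi (1:ℝ), ω t with hI
  set K : ENNReal := (𝓑.K : ENNReal) with hK
  set C : ENNReal :=
    ENNReal.ofReal c₂ * (K * η + K * K * η * ENNReal.ofReal I) + 1 with hC
  have hCT : C ≠ ⊤ := by
    refine ENNReal.add_ne_top.2 ⟨ENNReal.mul_ne_top ENNReal.ofReal_ne_top ?_, ENNReal.one_ne_top⟩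
    refine ENNReal.add_ne_top.2 ⟨?_, ?_⟩
    · exact ENNReal.mul_ne_top ENNReal.coe_ne_top ENNReal.coe_ne_top
    · exact ENNReal.mul_ne_top (ENNReal.mul_ne_top
        (ENNReal.mul_ne_top ENNReal.coe_ne_top ENNReal.coe_ne_top) ENNReal.coe_ne_top)
        ENNReal.ofReal_ne_top
  refine ⟨C, lt_of_lt_of_le zero_lt_one le_add_self, lt_top_iff_ne_top.2 hCT, ?_⟩
  intro B hB φ hφ f hf hfφ x hx
  set m := μ B with hm
  have hm0 : m ≠ 0 := (𝓑.pos B hB).ne'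
  have hmT : m ≠ ⊤ := (𝓑.fin B hB).ne
  have hmR : 0 < m.toReal := ENNReal.toReal_pos hm0 hmT
  set M := 𝓑.maxFn f x with hM
  -- cancellation helper
  have hcancel : ∀ c : ℝ, ENNReal.ofReal (c / m.toReal) * m = ENNReal.ofReal c := by
    intro c
    rw [ENNReal.ofReal_div_of_pos hmR, ENNReal.ofReal_toReal hmT,
      ENNReal.div_mul_cancel hm0 hmT]
  -- the distance is everywhere finite and at least `m`
  have hd_lt : ∀ y : X, 𝓑.dist y B < ⊤ := dist_lt_top hdb hB
  have hd_ge1 : ∀ y : X, 1 ≤ ((𝓑.dist y B / m).toReal) := by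
    intro y
    have h1 : (1:ENNReal) ≤ 𝓑.dist y B / m :=
      (ENNReal.le_div_iff_mul_le (Or.inl hm0) (Or.inl hmT)).2 (by simpa using le_dist (𝓑 := 𝓑) y)
    have hfin : 𝓑.dist y B / m ≠ ⊤ := (ENNReal.div_lt_top (hd_lt y).ne hm0).ne
    simpa using ENNReal.toReal_mono hfin h1
  have hφ_glob : ∀ y, φ y ≤ c₂ / m.toReal := by
    intro y
    refine (hφ.upper y).trans ?_
    exact mul_le_of_le_one_right (div_nonneg hc₂.le ENNReal.toReal_nonneg)
      (hω.le_one _ (hd_ge1 y))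
  have hnφ : ∀ y, (‖φ y‖₊ : ENNReal) = ENNReal.ofReal (φ y) := fun y =>
    Real.enorm_eq_ofReal (hφ.nonneg y)
  -- the key set estimate
  have key : ∀ (S D : Set X), MeasurableSet S → S ⊆ D → D ∈ 𝓑.balls → x ∈ D →
      ∀ b : ℝ, (∀ y ∈ S, φ y ≤ b) →
      ∫⁻ y in S, (‖f y‖₊ * ‖φ y‖₊ : ENNReal) ∂μ ≤ ENNReal.ofReal b * (μ D * M) := by
    intro S D hS hSD hD hxD b hb
    calc ∫⁻ y in S, (‖f y‖₊ * ‖φ y‖₊ : ENNReal) ∂μ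
        ≤ ∫⁻ y in S, ENNReal.ofReal b * ‖f y‖₊ ∂μ := by
          refine setLIntegral_mono' hS fun y hy => ?_
          rw [mul_comm]
          exact mul_le_mul_left ((hnφ y).le.trans (ENNReal.ofReal_le_ofReal (hb y hy))) _
    _ = ENNReal.ofReal b * ∫⁻ y in S, ‖f y‖₊ ∂μ :=
          lintegral_const_mul' _ _ ENNReal.ofReal_ne_top
    _ ≤ ENNReal.ofReal b * ∫⁻ y in D, ‖f y‖₊ ∂μ :=
          mul_le_mul_right (lintegral_mono_set hSD) _
    _ ≤ ENNReal.ofReal b * (μ D * M) := mul_le_mul_right (maxFn_bound hD hxD) _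
  -- the decomposition of the space
  set S : ℕ → Set X := fun k => Nat.rec (𝓑.chain η B 1)
    (fun k _ => 𝓑.chain η B (k+2) \ 𝓑.chain η B (k+1)) k with hS
  have hS0 : S 0 = 𝓑.chain η B 1 := rfl
  have hSsucc : ∀ k, S (k+1) = 𝓑.chain η B (k+2) \ 𝓑.chain η B (k+1) := fun k => rfl
  have hSmeas : ∀ k, MeasurableSet (S k) := by
    intro k
    cases k with
    | zero => exact 𝓑.meas _ (chain_mem hB 1)
    | succ k => exact (𝓑.meas _ (chain_mem hB (k+2))).diff (𝓑.meas _ (chain_mem hB (k+1)))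
  have hScover : Set.univ ⊆ ⋃ k, S k := by
    rw [← chain_cover hdb hB]
    refine Set.iUnion_subset fun n => ?_
    induction n with
    | zero => exact (chain_subset_succ hB 0).trans (Set.subset_iUnion S 0)
    | succ n ih =>
        intro y hy
        by_cases hyn : y ∈ 𝓑.chain η B n
        · exact ih hyn
        · cases n with
          | zero => exact Set.subset_iUnion S 0 hy
          | succ n =>
              exact Set.subset_iUnion S (n+1) ⟨hy, hyn⟩
  -- the term-by-term bounds
  have term0 : ∫⁻ y in S 0, (‖f y‖₊ * ‖φ y‖₊ : ENNReal) ∂μ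
      ≤ ENNReal.ofReal c₂ * (K * η) * M := by
    have h1 := key (S 0) (𝓑.chain η B 1) (hSmeas 0) (hS0 ▸ subset_rfl) (chain_mem hB 1)
      (subset_chain hB 1 hx) (c₂ / m.toReal) (fun y _ => hφ_glob y)
    refine h1.trans ?_
    have h2 : μ (𝓑.chain η B 1) ≤ K * η * m := by
      calc μ (𝓑.chain η B 1) ≤ K * μ (𝓑.enl η B) := 𝓑.hull_bound _ (enl_mem hB)
      _ ≤ K * (η * m) := mul_le_mul_right (enl_meas_le hdb hB) _
      _ = K * η * m := (mul_assoc _ _ _).symm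
    calc ENNReal.ofReal (c₂ / m.toReal) * (μ (𝓑.chain η B 1) * M)
        ≤ ENNReal.ofReal (c₂ / m.toReal) * (K * η * m * M) := by gcongr
    _ = ENNReal.ofReal (c₂ / m.toReal) * m * (K * η) * M := by ring
    _ = ENNReal.ofReal c₂ * (K * η) * M := by rw [hcancel]
  have termsucc : ∀ k : ℕ, ∫⁻ y in S (k+1), (‖f y‖₊ * ‖φ y‖₊ : ENNReal) ∂μ
      ≤ ENNReal.ofReal c₂ * (K * K * η) *
        (if 𝓑.chain η B (k+1) = Set.univ then 0
          else ENNReal.ofReal (𝓑.sval η B k * ω (2 * 𝓑.sval η B k))) * M := by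
    intro k
    by_cases hu : 𝓑.chain η B (k+1) = Set.univ
    · rw [hSsucc k, if_pos hu, hu]
      simp
    · rw [if_neg hu]
      have h2k : (2:ℝ) ≤ 𝓑.sval η B k := two_le_sval hdb hB hu
      set sk := 𝓑.sval η B k with hsk
      have hEfin : μ (𝓑.enl η (𝓑.chain η B k)) ≠ ⊤ := (𝓑.fin _ (enl_mem (chain_mem hB k))).ne
      -- pointwise bound on the annulus
      have hpt : ∀ y ∈ S (k+1), φ y ≤ c₂ * ω (2 * sk) / m.toReal := by
        intro y hy
        rw [hSsucc k] at hy
        have hyd : 2 * μ (𝓑.enl η (𝓑.chain η B k)) ≤ 𝓑.dist y B := dist_ge hdb hB hy.2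
        have harg : 2 * sk ≤ (𝓑.dist y B / m).toReal := by
          have h3 : 2 * μ (𝓑.enl η (𝓑.chain η B k)) / m ≤ 𝓑.dist y B / m :=
            ENNReal.div_le_div_right hyd _
          have h4 := ENNReal.toReal_mono ((ENNReal.div_lt_top (hd_lt y).ne hm0).ne) h3
          refine le_trans (le_of_eq ?_) h4
          rw [ENNReal.toReal_div, ENNReal.toReal_mul, hsk, sval]
          simp [mul_div_assoc, hm]
        have hω2 : ω ((𝓑.dist y B / m).toReal) ≤ ω (2 * sk) :=
          hω.antitone (2 * sk) _ (by linarith) harg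
        calc φ y ≤ c₂ / m.toReal * ω ((𝓑.dist y B / m).toReal) := hφ.upper y
        _ ≤ c₂ / m.toReal * ω (2 * sk) := by
            refine mul_le_mul_of_nonneg_left hω2 (div_nonneg hc₂.le ENNReal.toReal_nonneg)
        _ = c₂ * ω (2 * sk) / m.toReal := by ring
      have h1 := key (S (k+1)) (𝓑.chain η B (k+2)) (hSmeas (k+1))
        (by rw [hSsucc k]; exact Set.diff_subset) (chain_mem hB (k+2))
        (subset_chain hB (k+2) hx) _ hpt
      refine h1.trans ?_
      -- the measure bound
      have hE : μ (𝓑.enl η (𝓑.chain η B k)) = ENNReal.ofReal sk * m := by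
        have hs2 : sk = ((μ (𝓑.enl η (𝓑.chain η B k)) / m).toReal) := by
          rw [hsk, sval, ENNReal.toReal_div, hm]
        rw [hs2, ENNReal.ofReal_toReal ((ENNReal.div_lt_top hEfin hm0).ne),
          ENNReal.div_mul_cancel hm0 hmT]
      have h2 : μ (𝓑.chain η B (k+2)) ≤ K * K * η * (ENNReal.ofReal sk * m) := by
        calc μ (𝓑.chain η B (k+2)) ≤ K * μ (𝓑.enl η (𝓑.chain η B (k+1))) :=
              𝓑.hull_bound _ (enl_mem (chain_mem hB (k+1)))
        _ ≤ K * (η * μ (𝓑.chain η B (k+1))) :=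
              mul_le_mul_right (enl_meas_le hdb (chain_mem hB (k+1))) _
        _ ≤ K * (η * (K * μ (𝓑.enl η (𝓑.chain η B k)))) := by
              gcongr
              exact 𝓑.hull_bound _ (enl_mem (chain_mem hB k))
        _ = K * K * η * μ (𝓑.enl η (𝓑.chain η B k)) := by ring
        _ = K * K * η * (ENNReal.ofReal sk * m) := by rw [hE]
      have hωnn : 0 ≤ ω (2 * sk) := hω.nonneg _ (by linarith)
      calc ENNReal.ofReal (c₂ * ω (2 * sk) / m.toReal) * (μ (𝓑.chain η B (k+2)) * M)
          ≤ ENNReal.ofReal (c₂ * ω (2 * sk) / m.toReal) *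
            (K * K * η * (ENNReal.ofReal sk * m) * M) := by gcongr
      _ = ENNReal.ofReal (c₂ * ω (2 * sk) / m.toReal) * m *
            (K * K * η) * ENNReal.ofReal sk * M := by ring
      _ = ENNReal.ofReal (c₂ * ω (2 * sk)) * (K * K * η) * ENNReal.ofReal sk * M := by
            rw [hcancel]
      _ = ENNReal.ofReal c₂ * (K * K * η) *
            (ENNReal.ofReal (ω (2 * sk)) * ENNReal.ofReal sk) * M := by
            rw [ENNReal.ofReal_mul hc₂.le]; ring
      _ = ENNReal.ofReal c₂ * (K * K * η) * ENNReal.ofReal (sk * ω (2 * sk)) * M := by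
            rw [← ENNReal.ofReal_mul hωnn, mul_comm (ω (2 * sk)) sk]
  -- assembling
  have main : ∫⁻ y, (‖f y‖₊ * ‖φ y‖₊ : ENNReal) ∂μ ≤ C * M := by
    calc ∫⁻ y, (‖f y‖₊ * ‖φ y‖₊ : ENNReal) ∂μ
        = ∫⁻ y in Set.univ, (‖f y‖₊ * ‖φ y‖₊ : ENNReal) ∂μ := by rw [setLIntegral_univ]
    _ ≤ ∫⁻ y in ⋃ k, S k, (‖f y‖₊ * ‖φ y‖₊ : ENNReal) ∂μ := lintegral_mono_set hScover
    _ ≤ ∑' k, ∫⁻ y in S k, (‖f y‖₊ * ‖φ y‖₊ : ENNReal) ∂μ := lintegral_iUnion_le _ _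
    _ = (∫⁻ y in S 0, (‖f y‖₊ * ‖φ y‖₊ : ENNReal) ∂μ) +
        ∑' k, ∫⁻ y in S (k+1), (‖f y‖₊ * ‖φ y‖₊ : ENNReal) ∂μ := by
          rw [tsum_eq_zero_add' ENNReal.summable]
    _ ≤ ENNReal.ofReal c₂ * (K * η) * M +
        ∑' k, ENNReal.ofReal c₂ * (K * K * η) *
          (if 𝓑.chain η B (k+1) = Set.univ then 0
            else ENNReal.ofReal (𝓑.sval η B k * ω (2 * 𝓑.sval η B k))) * M := by
          exact add_le_add term0 (ENNReal.tsum_le_tsum termsucc)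
    _ = ENNReal.ofReal c₂ * (K * η) * M + ENNReal.ofReal c₂ * (K * K * η) *
          (∑' k, (if 𝓑.chain η B (k+1) = Set.univ then 0
            else ENNReal.ofReal (𝓑.sval η B k * ω (2 * 𝓑.sval η B k)))) * M := by
          rw [ENNReal.tsum_mul_right, ENNReal.tsum_mul_left]
    _ ≤ ENNReal.ofReal c₂ * (K * η) * M + ENNReal.ofReal c₂ * (K * K * η) *
          ENNReal.ofReal I * M := by
          gcongr
          exact key_sum hdb hB hω hωint
    _ = (ENNReal.ofReal c₂ * (K * η + K * K * η * ENNReal.ofReal I)) * M := by ring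
    _ ≤ C * M := by
          rw [hC]
          exact mul_le_mul_left le_self_add _
  calc ENNReal.ofReal |∫ y, f y * φ y ∂μ|
      = (‖∫ y, f y * φ y ∂μ‖₊ : ENNReal) := by
        rw [← Real.norm_eq_abs, ofReal_norm, enorm_eq_nnnorm]
  _ ≤ ∫⁻ y, (‖f y * φ y‖₊ : ENNReal) ∂μ := enorm_integral_le_lintegral_enorm _
  _ = ∫⁻ y, (‖f y‖₊ * ‖φ y‖₊ : ENNReal) ∂μ := by
        simp only [nnnorm_mul, ENNReal.coe_mul]
  _ ≤ C * M := main



/-- If `φ_B` is a kernel comparable with a ball `B` (with `∫₁^∞ ω < ∞`), then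
for every `x ∈ B`, `|∫ f φ_B| ≤ C · Mf(x)` with an admissible constant `C`. -/
theorem kernel_avg_le_maxFn {X : Type*} [MeasurableSpace X] (μ : Measure X)
    (𝓑 : BallBasis X μ) (η : NNReal) (hdb : 𝓑.Doubling η)
    (ω : ℝ → ℝ) (c₀ c₁ c₂ : ℝ) (hc₁ : 0 < c₁) (hc₂ : 0 < c₂)
    (hω : IsModulus ω c₀) (hωint : IntegrableOn ω (Set.Ioi (1 : ℝ))) :
    ∃ C : ENNReal, 0 < C ∧ C < ⊤ ∧
      ∀ B ∈ 𝓑.balls, ∀ φ : X → ℝ, Comparable 𝓑 ω c₁ c₂ B φ →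
      ∀ f : X → ℝ, (∀ D ∈ 𝓑.balls, IntegrableOn f D μ) →
        Integrable (fun y => f y * φ y) μ →
      ∀ x ∈ B,
        ENNReal.ofReal |∫ y, f y * φ y ∂μ| ≤ C * 𝓑.maxFn f x := by
  exact kernel_avg_le_maxFn' μ 𝓑 η hdb ω c₀ c₁ c₂ hc₁ hc₂ hω hωint
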